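/- Let n ≥ 1 and let B ⊆ ℝ^{n+1} be a convex body containing no affine line, with 0 ∈ ∂B and B ⊆ {x ∈ ℝ^{n+1} : x₁ ≥ 0}, and suppose the first standard basis vector e₁ lies in (int N) ∩ R, where N and R are the normal cone (with respect to the standard Euclidean inner product) and recession cone of B. Then for every a > 0, the level set L_a = ∂B ∩ {x ∈ ℝ^{n+1} : x₁ = a} is nonempty, compact, and homeomorphic to the sphere S^{n−1}. -/

import Mathlib

/-!
Since `e₁` is an interior point of the normal cone, each functional `⟪·, e₁ + δ • v⟫` with `δ > 0`
small is bounded below on `B`; as `⟪·, e₁⟫` is constant on the hyperplane `x 0 = a`, every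
functional is bounded below on the slice `B ∩ {x 0 = a}`, which is therefore compact. Pushing an
interior point of `B` near `0` along the recession direction `e₁` gives an interior point at
height `a`. Identifying the hyperplane with `ℝⁿ`, the slice becomes a compact convex body `K` with
nonempty interior, and by convexity `∂B` meets the hyperplane exactly in `∂K`. The radial (gauge)
homeomorphism of `ℝⁿ` carries `∂K` onto the unit sphere.
-/

open Set RealInnerProductSpace

noncomputable section

/-- The normal cone of a convex body `B` with respect to the standard Euclidean
inner product. -/
def euclNormalCone {n : ℕ} (B : Set (EuclideanSpace ℝ (Fin (n + 1)))) :
    Set (EuclideanSpace ℝ (Fin (n + 1))) :=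
  {w | w ≠ 0 ∧ ∃ p ∈ frontier B, ∀ x ∈ B, 0 ≤ ⟪x - p, w⟫}

/-- The recession cone of a convex body `B`. -/
def recessionCone {n : ℕ} (B : Set (EuclideanSpace ℝ (Fin n))) :
    Set (EuclideanSpace ℝ (Fin n)) :=
  {v | ∀ x ∈ B, ∀ t : ℝ, 0 ≤ t → x + t • v ∈ B}

/-- The first standard basis vector `e₁` of `ℝ^(n+1)`. -/
def e₁ (n : ℕ) : EuclideanSpace ℝ (Fin (n + 1)) :=
  EuclideanSpace.single 0 1

open Filter Topology Bornology

theorem EuclideanSpace.isBounded_of_forall_bddBelow_inner {ι : Type*} [Fintype ι]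
    {S : Set (EuclideanSpace ℝ ι)} (h : ∀ v, BddBelow ((⟪·, v⟫) '' S)) : IsBounded S := by
  classical
  have hcoord : ∀ i, IsBounded ((fun x : EuclideanSpace ℝ ι => x i) '' S) := by
    intro i
    refine isBounded_iff_bddBelow_bddAbove.2 ⟨?_, ?_⟩
    · simpa [EuclideanSpace.inner_single_right] using h (EuclideanSpace.single i 1)
    · obtain ⟨c, hc⟩ := h (EuclideanSpace.single i (-1))
      refine ⟨-c, ?_⟩
      rintro _ ⟨x, hx, rfl⟩
      have := hc ⟨x, hx, rfl⟩
      simp only [EuclideanSpace.inner_single_right, Real.ringHom_apply, neg_mul, one_mul] at this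
      linarith
  have : IsBounded (WithLp.ofLp '' S) := by
    rw [← forall_isBounded_image_eval_iff]
    intro i
    simpa [image_image] using hcoord i
  exact isBounded_induced.mpr this

section

variable {E F : Type*} [AddCommGroup E] [Module ℝ E] [TopologicalSpace E]
  [IsTopologicalAddGroup E] [ContinuousSMul ℝ E] [AddCommGroup F] [Module ℝ F] [TopologicalSpace F]
  [IsTopologicalAddGroup F] [ContinuousSMul ℝ F]

theorem Convex.preimage_interior_eq_interior_preimage {B : Set E} (hB : Convex ℝ B)
    (f : F →ᵃ[ℝ] E) (hf : Continuous f) {u : F} (hu : f u ∈ interior B) :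
    f ⁻¹' interior B = interior (f ⁻¹' B) := by
  refine (preimage_interior_subset_interior_preimage hf).antisymm fun y hy => ?_
  -- Overshooting `y` from `u` stays in `f ⁻¹' B`, so `y` lies strictly inside a segment from `u`.
  have hline : Tendsto (AffineMap.lineMap u y) (𝓝[>] (1 : ℝ)) (𝓝 y) := by
    have : Continuous (AffineMap.lineMap u y : ℝ → F) := by fun_prop
    simpa using (this.tendsto 1).mono_left nhdsWithin_le_nhds
  obtain ⟨t, hz, ht⟩ := ((hline.eventually (mem_interior_iff_mem_nhds.1 hy)).and
    self_mem_nhdsWithin).exists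
  have ht0 : t ≠ 0 := (zero_lt_one.trans ht).ne'
  have hy_eq : AffineMap.lineMap u (AffineMap.lineMap u y t) t⁻¹ = y := by
    rw [AffineMap.lineMap_lineMap_right, inv_mul_cancel₀ ht0, AffineMap.lineMap_apply_one]
  have := hB.openSegment_interior_self_subset_interior hu hz
  rw [← hy_eq, mem_preimage, f.apply_lineMap]
  exact this (lineMap_mem_openSegment ℝ _ _
    ⟨inv_pos.2 (zero_lt_one.trans ht), inv_lt_one_of_one_lt₀ ht⟩)

theorem Convex.preimage_frontier_eq_frontier_preimage {B : Set E} (hB : Convex ℝ B)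
    (hBc : IsClosed B) (f : F →ᵃ[ℝ] E) (hf : Continuous f) {u : F} (hu : f u ∈ interior B) :
    f ⁻¹' frontier B = frontier (f ⁻¹' B) := by
  rw [hBc.frontier_eq, (hBc.preimage hf).frontier_eq, preimage_sdiff,
    hB.preimage_interior_eq_interior_preimage f hf hu]

end

theorem Convex.nonempty_homeomorph_frontier_sphere {E : Type*} [NormedAddCommGroup E]
    [NormedSpace ℝ E] [FiniteDimensional ℝ E] {s : Set E} (hs : Convex ℝ s)
    (hne : (interior s).Nonempty) (hb : IsBounded s) :
    Nonempty (frontier s ≃ₜ Metric.sphere (0 : E) 1) := by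
  obtain ⟨h, -, -, himg⟩ := exists_homeomorph_image_interior_closure_frontier_eq_unitBall hs hne hb
  exact ⟨(h.image _).trans (Homeomorph.setCongr himg)⟩

section

variable {n : ℕ}

lemma inner_e₁ (x : EuclideanSpace ℝ (Fin (n + 1))) : ⟪x, e₁ n⟫ = x 0 := by
  simp [e₁, EuclideanSpace.inner_single_right]

lemma add_smul_mem_interior_of_mem_recessionCone {B : Set (EuclideanSpace ℝ (Fin n))}
    {v : EuclideanSpace ℝ (Fin n)} (hv : v ∈ recessionCone B) {x : EuclideanSpace ℝ (Fin n)}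
    (hx : x ∈ interior B) {t : ℝ} (ht : 0 ≤ t) : x + t • v ∈ interior B := by
  refine interior_maximal ?_ ((Homeomorph.addRight (t • v)).isOpenMap _ isOpen_interior)
    (mem_image_of_mem _ hx)
  rintro _ ⟨y, hy, rfl⟩
  exact hv y (interior_subset hy) t ht

lemma bddBelow_inner_of_mem_euclNormalCone {B : Set (EuclideanSpace ℝ (Fin (n + 1)))}
    {w : EuclideanSpace ℝ (Fin (n + 1))} (hw : w ∈ euclNormalCone B) :
    BddBelow ((⟪·, w⟫) '' B) := by
  obtain ⟨-, p, -, hp⟩ := hw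
  refine ⟨⟪p, w⟫, ?_⟩
  rintro _ ⟨x, hx, rfl⟩
  have := hp x hx
  rw [inner_sub_left] at this
  linarith

lemma isBounded_inter_coord_zero_eq {B : Set (EuclideanSpace ℝ (Fin (n + 1)))}
    (hN : e₁ n ∈ interior (euclNormalCone B)) (a : ℝ) : IsBounded (B ∩ {x | x 0 = a}) := by
  refine EuclideanSpace.isBounded_of_forall_bddBelow_inner fun v => ?_
  have hline : Tendsto (fun t : ℝ => e₁ n + t • v) (𝓝[>] 0) (𝓝 (e₁ n)) := by
    have : Continuous (fun t : ℝ => e₁ n + t • v) := by fun_prop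
    simpa using (this.tendsto 0).mono_left nhdsWithin_le_nhds
  obtain ⟨δ, hδN, hδ⟩ := ((hline.eventually (mem_interior_iff_mem_nhds.1 hN)).and
    self_mem_nhdsWithin).exists
  obtain ⟨c, hc⟩ := bddBelow_inner_of_mem_euclNormalCone hδN
  refine ⟨(c - a) / δ, ?_⟩
  rintro _ ⟨x, ⟨hxB, hxa : x 0 = a⟩, rfl⟩
  have := hc ⟨x, hxB, rfl⟩
  simp only [inner_add_right, inner_smul_right, inner_e₁, hxa] at this
  show (c - a) / δ ≤ ⟪x, v⟫
  rw [div_le_iff₀ hδ]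
  linarith

lemma exists_mem_interior_coord_zero_eq {B : Set (EuclideanSpace ℝ (Fin (n + 1)))}
    (hconv : Convex ℝ B) (hint : (interior B).Nonempty) (h0 : 0 ∈ closure B)
    (hR : e₁ n ∈ recessionCone B) {a : ℝ} (ha : 0 < a) : ∃ u ∈ interior B, u 0 = a := by
  rw [← hconv.closure_interior_eq_closure_of_nonempty_interior hint] at h0
  have hlow : {x : EuclideanSpace ℝ (Fin (n + 1)) | x 0 < a} ∈ 𝓝 0 :=
    (isOpen_lt (by fun_prop) continuous_const).mem_nhds ha
  obtain ⟨y, hya, hy⟩ := mem_closure_iff_nhds.1 h0 _ hlow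
  refine ⟨y + (a - y 0) • e₁ n, add_smul_mem_interior_of_mem_recessionCone hR hy
    (sub_nonneg.2 hya.le), ?_⟩
  simp [e₁]

end

def sliceEmbedding (n : ℕ) (a : ℝ) :
    EuclideanSpace ℝ (Fin n) →ᵃ[ℝ] EuclideanSpace ℝ (Fin (n + 1)) where
  toFun y := WithLp.toLp 2 (Fin.cons a y.ofLp)
  linear :=
    { toFun := fun y => WithLp.toLp 2 (Fin.cons 0 y.ofLp)
      map_add' := fun y z => by ext i; cases i using Fin.cases <;> simp
      map_smul' := fun c y => by ext i; cases i using Fin.cases <;> simp }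
  map_vadd' y z := by ext i; cases i using Fin.cases <;> simp

section

variable {n : ℕ}

@[simp]
lemma sliceEmbedding_apply_zero (a : ℝ) (y : EuclideanSpace ℝ (Fin n)) :
    sliceEmbedding n a y 0 = a := rfl

@[simp]
lemma sliceEmbedding_apply_succ (a : ℝ) (y : EuclideanSpace ℝ (Fin n)) (i : Fin n) :
    sliceEmbedding n a y i.succ = y i := rfl

lemma isometry_sliceEmbedding (a : ℝ) : Isometry (sliceEmbedding n a) :=
  Isometry.of_dist_eq fun y z => by
    simp [EuclideanSpace.dist_eq, Fin.sum_univ_succ]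

lemma range_sliceEmbedding (a : ℝ) : range (sliceEmbedding n a) = {x | x 0 = a} := by
  refine (range_subset_iff.2 fun y => sliceEmbedding_apply_zero a y).antisymm fun x hx => ?_
  refine ⟨WithLp.toLp 2 fun i => x i.succ, ?_⟩
  ext i
  cases i using Fin.cases
  · exact hx.symm
  · rfl

end

theorem stmt_14_general (n : ℕ) (hn : 1 ≤ n)
    (B : Set (EuclideanSpace ℝ (Fin (n + 1))))
    (hconv : Convex ℝ B) (hclosed : IsClosed B) (hint : (interior B).Nonempty)
    (h0 : (0 : EuclideanSpace ℝ (Fin (n + 1))) ∈ frontier B)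
    (he₁N : e₁ n ∈ interior (euclNormalCone B))
    (he₁R : e₁ n ∈ recessionCone B) :
    ∀ a : ℝ, 0 < a →
      (frontier B ∩ {x | x 0 = a}).Nonempty ∧
      IsCompact (frontier B ∩ {x | x 0 = a}) ∧
      Nonempty ((frontier B ∩ {x | x 0 = a} : Set (EuclideanSpace ℝ (Fin (n + 1)))) ≃ₜ
        (Metric.sphere (0 : EuclideanSpace ℝ (Fin n)) 1 : Set (EuclideanSpace ℝ (Fin n)))) := by
  intro a ha
  set f := sliceEmbedding n a
  have hf : Continuous f := (isometry_sliceEmbedding a).continuous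
  set K := f ⁻¹' B
  obtain ⟨u, hu, hua⟩ := exists_mem_interior_coord_zero_eq hconv hint h0.1 he₁R ha
  obtain ⟨u, rfl⟩ : u ∈ range f := (range_sliceEmbedding a).symm ▸ hua
  have hfrontier : f ⁻¹' (frontier B ∩ {x | x 0 = a}) = frontier K := by
    rw [← range_sliceEmbedding, preimage_inter, preimage_range, inter_univ,
      hconv.preimage_frontier_eq_frontier_preimage hclosed f hf hu]
  have hKint : (interior K).Nonempty :=
    ⟨u, hconv.preimage_interior_eq_interior_preimage f hf hu ▸ hu⟩
  have hKbdd : IsBounded K :=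
    ((isometry_sliceEmbedding a).antilipschitz.isBounded_preimage
      (isBounded_inter_coord_zero_eq he₁N a)).subset fun y hy => ⟨hy, sliceEmbedding_apply_zero ..⟩
  obtain ⟨e⟩ := (hconv.affine_preimage f).nonempty_homeomorph_frontier_sphere hKint hKbdd
  have hslice : frontier B ∩ {x | x 0 = a} ⊆ range f := by
    rw [range_sliceEmbedding]
    exact inter_subset_right
  let eslice :=
    ((isometry_sliceEmbedding a).isEmbedding.homeomorphOfSubsetRange hslice).symm.trans
      ((Homeomorph.setCongr hfrontier).trans e)
  have hsphere : (Metric.sphere (0 : EuclideanSpace ℝ (Fin n)) 1).Nonempty :=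
    ⟨EuclideanSpace.single ⟨0, hn⟩ 1, by simp⟩
  exact ⟨⟨_, (eslice.symm ⟨_, hsphere.some_mem⟩).2⟩,
    isCompact_iff_compactSpace.2 eslice.symm.compactSpace, ⟨eslice⟩⟩

theorem stmt_14 (n : ℕ) (hn : 1 ≤ n)
    (B : Set (EuclideanSpace ℝ (Fin (n + 1))))
    (hconv : Convex ℝ B) (hclosed : IsClosed B) (hint : (interior B).Nonempty)
    (hnoline : ∀ a d : EuclideanSpace ℝ (Fin (n + 1)), d ≠ 0 → ∃ t : ℝ, a + t • d ∉ B)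
    (h0 : (0 : EuclideanSpace ℝ (Fin (n + 1))) ∈ frontier B)
    (hhalf : ∀ x ∈ B, 0 ≤ x 0)
    (he₁N : e₁ n ∈ interior (euclNormalCone B))
    (he₁R : e₁ n ∈ recessionCone B) :
    ∀ a : ℝ, 0 < a →
      (frontier B ∩ {x | x 0 = a}).Nonempty ∧
      IsCompact (frontier B ∩ {x | x 0 = a}) ∧
      Nonempty ((frontier B ∩ {x | x 0 = a} : Set (EuclideanSpace ℝ (Fin (n + 1)))) ≃ₜ
        (Metric.sphere (0 : EuclideanSpace ℝ (Fin n)) 1 : Set (EuclideanSpace ℝ (Fin n)))) :=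
  stmt_14_general n hn B hconv hclosed hint h0 he₁N he₁R

end
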